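/- arXiv:0812.2604 — 6 statements merged into one kernel-verified Lean document; each statement's English description precedes it below -/
import Mathlib

section
/- Let μ, μ̂ ∈ ℝ^p, let Σ, Σ̂ be p×p real matrices with entries σ_{ij} and σ̂_{ij}, let λ > 0, let a₁,…,a_p > 0 be positive weights, and let c > 0. If w ∈ ℝ^p satisfies the weighted gross-exposure constraint Σ_{i=1}^p a_i |w_i| ≤ c, then |M(μ̂, Σ̂) − M(μ, Σ)| ≤ c · max_j |μ̂_j − μ_j|/a_j + λ c² · max_{i,j} |σ̂_{ij} − σ_{ij}|/(a_i a_j), where M(μ, Σ) = wᵀμ − λ wᵀΣw. -/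
open Matrix Finset

/-- Weighted gross-exposure version of the Markowitz utility approximation bound:
if Σᵢ aᵢ|wᵢ| ≤ c with positive weights aᵢ, then
|M(μ̂, Σ̂) − M(μ, Σ)| ≤ c · max_j |μ̂_j − μ_j|/a_j + λ c² · max_{i,j} |σ̂_{ij} − σ_{ij}|/(a_i a_j). -/
theorem markowitz_objective_sensitivity_weighted
    (p : ℕ) (μ μhat : Fin p → ℝ) (S Shat : Matrix (Fin p) (Fin p) ℝ)
    (lam : ℝ) (hlam : 0 < lam) (a : Fin p → ℝ) (ha : ∀ i, 0 < a i)
    (c : ℝ) (hc : 0 < c) (w : Fin p → ℝ)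
    (hw : ∑ i, a i * |w i| ≤ c) :
    |(w ⬝ᵥ μhat - lam * (w ⬝ᵥ Shat.mulVec w)) - (w ⬝ᵥ μ - lam * (w ⬝ᵥ S.mulVec w))| ≤
      c * (⨆ j, |μhat j - μ j| / a j) +
        lam * c ^ 2 * (⨆ i, ⨆ j, |Shat i j - S i j| / (a i * a j)) := by
  rcases Nat.eq_zero_or_pos p with hp | hp
  · subst hp
    simp [dotProduct, Matrix.mulVec]
  · haveI : Nonempty (Fin p) := ⟨⟨0, hp⟩⟩
    set M1 := ⨆ j, |μhat j - μ j| / a j with hM1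
    set M2 := ⨆ i, ⨆ j, |Shat i j - S i j| / (a i * a j) with hM2
    have hbdd1 : BddAbove (Set.range fun j => |μhat j - μ j| / a j) :=
      Set.Finite.bddAbove (Set.finite_range _)
    have hM1le : ∀ j, |μhat j - μ j| / a j ≤ M1 := fun j => le_ciSup hbdd1 j
    have hM1nn : 0 ≤ M1 :=
      le_trans (div_nonneg (abs_nonneg _) (ha _).le) (hM1le (Classical.arbitrary _))
    have hbdd2 : ∀ i, BddAbove (Set.range fun j => |Shat i j - S i j| / (a i * a j)) :=
      fun i => Set.Finite.bddAbove (Set.finite_range _)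
    have hbdd2' : BddAbove (Set.range fun i => ⨆ j, |Shat i j - S i j| / (a i * a j)) :=
      Set.Finite.bddAbove (Set.finite_range _)
    have hM2le : ∀ i j, |Shat i j - S i j| / (a i * a j) ≤ M2 := fun i j =>
      le_trans (le_ciSup (hbdd2 i) j) (le_ciSup hbdd2' i)
    have hM2nn : 0 ≤ M2 := by
      refine le_trans ?_ (hM2le (Classical.arbitrary _) (Classical.arbitrary _))
      exact div_nonneg (abs_nonneg _) (mul_nonneg (ha _).le (ha _).le)
    have hA0 : 0 ≤ ∑ i, a i * |w i| :=
      Finset.sum_nonneg fun i _ => mul_nonneg (ha i).le (abs_nonneg _)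
    have h1 : |∑ i, w i * (μhat i - μ i)| ≤ c * M1 := by
      calc |∑ i, w i * (μhat i - μ i)| ≤ ∑ i, |w i * (μhat i - μ i)| :=
            Finset.abs_sum_le_sum_abs _ _
        _ ≤ ∑ i, (a i * |w i|) * M1 := by
            refine Finset.sum_le_sum fun i _ => ?_
            rw [abs_mul]
            have hai := ha i
            calc |w i| * |μhat i - μ i|
                = (a i * |w i|) * (|μhat i - μ i| / a i) := by field_simp
              _ ≤ (a i * |w i|) * M1 := by
                  exact mul_le_mul_of_nonneg_left (hM1le i)
                    (mul_nonneg (ha i).le (abs_nonneg _))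
        _ = (∑ i, a i * |w i|) * M1 := by rw [← Finset.sum_mul]
        _ ≤ c * M1 := mul_le_mul_of_nonneg_right hw hM1nn
    have h2 : |∑ i, w i * ∑ j, (Shat i j - S i j) * w j| ≤ c ^ 2 * M2 := by
      calc |∑ i, w i * ∑ j, (Shat i j - S i j) * w j|
          = |∑ i, ∑ j, w i * ((Shat i j - S i j) * w j)| := by
            simp [Finset.mul_sum]
        _ ≤ ∑ i, |∑ j, w i * ((Shat i j - S i j) * w j)| :=
            Finset.abs_sum_le_sum_abs _ _
        _ ≤ ∑ i, ∑ j, |w i * ((Shat i j - S i j) * w j)| :=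
            Finset.sum_le_sum fun i _ => Finset.abs_sum_le_sum_abs _ _
        _ ≤ ∑ i, ∑ j, (a i * |w i|) * ((a j * |w j|) * M2) := by
            refine Finset.sum_le_sum fun i _ => Finset.sum_le_sum fun j _ => ?_
            have hai := ha i; have haj := ha j
            rw [abs_mul, abs_mul]
            calc |w i| * (|Shat i j - S i j| * |w j|)
                = ((a i * |w i|) * (a j * |w j|)) * (|Shat i j - S i j| / (a i * a j)) := by
                  field_simp
              _ ≤ ((a i * |w i|) * (a j * |w j|)) * M2 := by
                  exact mul_le_mul_of_nonneg_left (hM2le i j)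
                    (mul_nonneg (mul_nonneg (ha i).le (abs_nonneg _))
                      (mul_nonneg (ha j).le (abs_nonneg _)))
              _ = (a i * |w i|) * ((a j * |w j|) * M2) := by ring
        _ = (∑ i, a i * |w i|) * ((∑ j, a j * |w j|) * M2) := by
            simp only [Finset.sum_mul, Finset.mul_sum]
            rw [Finset.sum_comm]
        _ ≤ c * (c * M2) := by
            exact mul_le_mul hw (mul_le_mul_of_nonneg_right hw hM2nn)
              (mul_nonneg hA0 hM2nn) hc.le
        _ = c ^ 2 * M2 := by ring
    have key : (w ⬝ᵥ μhat - lam * (w ⬝ᵥ Shat.mulVec w)) - (w ⬝ᵥ μ - lam * (w ⬝ᵥ S.mulVec w))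
        = (∑ i, w i * (μhat i - μ i)) - lam * ∑ i, w i * ∑ j, (Shat i j - S i j) * w j := by
      simp [dotProduct, Matrix.mulVec, Finset.mul_sum, mul_sub, sub_mul,
        Finset.sum_sub_distrib]
      ring
    rw [key]
    calc |(∑ i, w i * (μhat i - μ i)) - lam * ∑ i, w i * ∑ j, (Shat i j - S i j) * w j|
        ≤ |∑ i, w i * (μhat i - μ i)| + |lam * ∑ i, w i * ∑ j, (Shat i j - S i j) * w j| :=
          abs_sub _ _
      _ = |∑ i, w i * (μhat i - μ i)| + lam * |∑ i, w i * ∑ j, (Shat i j - S i j) * w j| := by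
          rw [abs_mul, abs_of_pos hlam]
      _ ≤ c * M1 + lam * (c ^ 2 * M2) :=
          add_le_add h1 (mul_le_mul_of_nonneg_left h2 hlam.le)
      _ = c * M1 + lam * c ^ 2 * M2 := by ring
end

section
/- Let Σ and Σ̂ be p×p real matrices and set a_n = ‖Σ̂ − Σ‖_max = max_{i,j}|Σ̂_{ij} − Σ_{ij}|. Let c ≥ 1 and let K_c = {w ∈ ℝ^p : 1ᵀw = 1, ‖w‖₁ ≤ c}. Let R(w) = wᵀΣw and R_n(w) = wᵀΣ̂w, let w_opt be a minimizer of R over K_c, and let ŵ_opt be a minimizer of R_n over K_c. Then |R(ŵ_opt) − R(w_opt)| ≤ 2 a_n c². -/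
open Matrix Finset

lemma quad_form_bound {p : ℕ} (M : Matrix (Fin p) (Fin p) ℝ) (w : Fin p → ℝ)
    (a : ℝ) (hM : ∀ i j, |M i j| ≤ a) :
    |w ⬝ᵥ M.mulVec w| ≤ a * (∑ i, |w i|) ^ 2 := by
  have h1 : |w ⬝ᵥ M.mulVec w| ≤ ∑ i, |w i| * (a * ∑ j, |w j|) := by
    refine (Finset.abs_sum_le_sum_abs _ _).trans (Finset.sum_le_sum ?_)
    intro i _
    rw [abs_mul]
    refine mul_le_mul_of_nonneg_left ?_ (abs_nonneg _)
    calc |∑ j, M i j * w j| ≤ ∑ j, |M i j * w j| := Finset.abs_sum_le_sum_abs _ _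
      _ ≤ ∑ j, a * |w j| := by
          refine Finset.sum_le_sum fun j _ => ?_
          rw [abs_mul]
          exact mul_le_mul_of_nonneg_right (hM i j) (abs_nonneg _)
      _ = a * ∑ j, |w j| := by rw [Finset.mul_sum]
  calc |w ⬝ᵥ M.mulVec w| ≤ ∑ i, |w i| * (a * ∑ j, |w j|) := h1
    _ = a * (∑ i, |w i|) ^ 2 := by rw [← Finset.sum_mul]; ring

/-- Theorem 1, first inequality: with a_n = ‖Σ̂ − Σ‖_max and gross-exposure
constraint set K_c = {w : 1ᵀw = 1, ‖w‖₁ ≤ c}, the actual risk of the empirically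
optimal portfolio and the oracle risk differ by at most 2 a_n c². -/
theorem actual_risk_minus_oracle_risk_le
    (p : ℕ) (S Shat : Matrix (Fin p) (Fin p) ℝ) (c : ℝ) (hc : 1 ≤ c)
    (wopt what : Fin p → ℝ)
    (hwopt_sum : ∑ i, wopt i = 1) (hwopt_l1 : ∑ i, |wopt i| ≤ c)
    (hwopt_min : ∀ w : Fin p → ℝ, ∑ i, w i = 1 → ∑ i, |w i| ≤ c →
      wopt ⬝ᵥ S.mulVec wopt ≤ w ⬝ᵥ S.mulVec w)
    (hwhat_sum : ∑ i, what i = 1) (hwhat_l1 : ∑ i, |what i| ≤ c)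
    (hwhat_min : ∀ w : Fin p → ℝ, ∑ i, w i = 1 → ∑ i, |w i| ≤ c →
      what ⬝ᵥ Shat.mulVec what ≤ w ⬝ᵥ Shat.mulVec w) :
    |what ⬝ᵥ S.mulVec what - wopt ⬝ᵥ S.mulVec wopt| ≤
      2 * (⨆ i, ⨆ j, |Shat i j - S i j|) * c ^ 2 := by
  have hp : 0 < p := by
    by_contra h
    push_neg at h
    interval_cases p
    simp at hwopt_sum
  haveI : Nonempty (Fin p) := ⟨⟨0, hp⟩⟩
  set a := ⨆ i, ⨆ j, |Shat i j - S i j| with ha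
  have hMa : ∀ i j, |Shat i j - S i j| ≤ a := by
    intro i j
    have h1 : |Shat i j - S i j| ≤ ⨆ j, |Shat i j - S i j| :=
      le_ciSup (f := fun k => |Shat i k - S i k|) (Set.Finite.bddAbove (Set.finite_range _)) j
    have h2 : (⨆ j, |Shat i j - S i j|) ≤ a :=
      le_ciSup (f := fun k => ⨆ j, |Shat k j - S k j|) (Set.Finite.bddAbove (Set.finite_range _)) i
    exact h1.trans h2
  have hc0 : (0:ℝ) ≤ c := le_trans zero_le_one hc
  have key : ∀ w : Fin p → ℝ, ∑ i, |w i| ≤ c →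
      |w ⬝ᵥ Shat.mulVec w - w ⬝ᵥ S.mulVec w| ≤ a * c ^ 2 := by
    intro w hw
    have hdiff : w ⬝ᵥ Shat.mulVec w - w ⬝ᵥ S.mulVec w = w ⬝ᵥ (Shat - S).mulVec w := by
      simp [Matrix.sub_mulVec, dotProduct_sub]
    rw [hdiff]
    refine (quad_form_bound (Shat - S) w a (by simpa using hMa)).trans ?_
    have ha0 : 0 ≤ a := le_trans (abs_nonneg _) (hMa ⟨0, hp⟩ ⟨0, hp⟩)
    have hs0 : 0 ≤ ∑ i, |w i| := Finset.sum_nonneg fun i _ => abs_nonneg _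
    exact mul_le_mul_of_nonneg_left (pow_le_pow_left₀ hs0 hw 2) ha0
  have ha0 : 0 ≤ a := le_trans (abs_nonneg _) (hMa ⟨0, hp⟩ ⟨0, hp⟩)
  have h1 := key what hwhat_l1
  have h2 := key wopt hwopt_l1
  have h3 := hwopt_min what hwhat_sum hwhat_l1
  have h4 := hwhat_min wopt hwopt_sum hwopt_l1
  rw [abs_sub_le_iff]
  constructor
  · have e1 := abs_le.mp h1
    have e2 := abs_le.mp h2
    nlinarith [e1.1, e1.2, e2.1, e2.2]
  · nlinarith [mul_nonneg (mul_nonneg ha0 hc0) hc0]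
end

section
/- Let Σ and Σ̂ be p×p real matrices and set a_n = ‖Σ̂ − Σ‖_max = max_{i,j}|Σ̂_{ij} − Σ_{ij}|. Let c ≥ 1 and let K_c = {w ∈ ℝ^p : 1ᵀw = 1, ‖w‖₁ ≤ c}. Let R(w) = wᵀΣw and R_n(w) = wᵀΣ̂w, and let ŵ_opt be a minimizer of R_n over K_c. Then |R(ŵ_opt) − R_n(ŵ_opt)| ≤ a_n c². -/
open Matrix Finset

/-- Theorem 1, second inequality: with a_n = ‖Σ̂ − Σ‖_max and gross-exposure
constraint set K_c = {w : 1ᵀw = 1, ‖w‖₁ ≤ c}, the actual risk and the empirical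
risk of the empirically optimal portfolio differ by at most a_n c². -/
theorem actual_risk_minus_empirical_risk_le
    (p : ℕ) (S Shat : Matrix (Fin p) (Fin p) ℝ) (c : ℝ) (hc : 1 ≤ c)
    (what : Fin p → ℝ)
    (hwhat_sum : ∑ i, what i = 1) (hwhat_l1 : ∑ i, |what i| ≤ c)
    (hwhat_min : ∀ w : Fin p → ℝ, ∑ i, w i = 1 → ∑ i, |w i| ≤ c →
      what ⬝ᵥ Shat.mulVec what ≤ w ⬝ᵥ Shat.mulVec w) :
    |what ⬝ᵥ S.mulVec what - what ⬝ᵥ Shat.mulVec what| ≤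
      (⨆ i, ⨆ j, |Shat i j - S i j|) * c ^ 2 := by
  rcases Nat.eq_zero_or_pos p with hp | hp
  · subst hp; simp at hwhat_sum
  have hne : Nonempty (Fin p) := ⟨⟨0, hp⟩⟩
  set a := ⨆ i, ⨆ j, |Shat i j - S i j| with ha
  have hbd : ∀ i j, |Shat i j - S i j| ≤ a := by
    intro i j
    calc |Shat i j - S i j| ≤ ⨆ j, |Shat i j - S i j| :=
          le_ciSup (f := fun j => |Shat i j - S i j|)
            (Set.Finite.bddAbove (Set.finite_range _)) j
      _ ≤ a := le_ciSup (f := fun i => ⨆ j, |Shat i j - S i j|)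
          (Set.Finite.bddAbove (Set.finite_range _)) i
  have ha0 : 0 ≤ a := le_trans (abs_nonneg _) (hbd ⟨0, hp⟩ ⟨0, hp⟩)
  have expand : what ⬝ᵥ S.mulVec what - what ⬝ᵥ Shat.mulVec what
      = ∑ i, ∑ j, what i * (S i j - Shat i j) * what j := by
    simp only [dotProduct, mulVec, ← Finset.sum_sub_distrib, Finset.mul_sum]
    congr 1; ext i; congr 1; ext j; ring
  rw [expand]
  calc |∑ i, ∑ j, what i * (S i j - Shat i j) * what j|
      ≤ ∑ i, ∑ j, |what i * (S i j - Shat i j) * what j| := by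
        refine (Finset.abs_sum_le_sum_abs _ _).trans ?_
        exact Finset.sum_le_sum fun i _ => Finset.abs_sum_le_sum_abs _ _
    _ ≤ ∑ i, ∑ j, |what i| * a * |what j| := by
        refine Finset.sum_le_sum fun i _ => Finset.sum_le_sum fun j _ => ?_
        rw [abs_mul, abs_mul]
        have h1 : |S i j - Shat i j| ≤ a := by rw [abs_sub_comm]; exact hbd i j
        have := mul_le_mul_of_nonneg_left h1 (abs_nonneg (what i))
        exact mul_le_mul_of_nonneg_right this (abs_nonneg (what j))
    _ = a * (∑ i, |what i|) * (∑ j, |what j|) := by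
        simp only [Finset.mul_sum, Finset.sum_mul]
        exact Finset.sum_congr rfl fun i _ => Finset.sum_congr rfl fun j _ => by ring
    _ ≤ a * c * c := by
        have hc0 : (0:ℝ) ≤ c := le_trans zero_le_one hc
        have hl0 : 0 ≤ ∑ i, |what i| := Finset.sum_nonneg fun i _ => abs_nonneg _
        have h1 : a * (∑ i, |what i|) ≤ a * c := mul_le_mul_of_nonneg_left hwhat_l1 ha0
        exact mul_le_mul h1 hwhat_l1 hl0 (mul_nonneg ha0 hc0)
    _ = a * c ^ 2 := by ring
end

section
/- Let Σ and Σ̂ be p×p real matrices and set a_n = ‖Σ̂ − Σ‖_max = max_{i,j}|Σ̂_{ij} − Σ_{ij}|. Let c ≥ 1 and let K_c = {w ∈ ℝ^p : 1ᵀw = 1, ‖w‖₁ ≤ c}. Let R(w) = wᵀΣw and R_n(w) = wᵀΣ̂w, let w_opt be a minimizer of R over K_c, and let ŵ_opt be a minimizer of R_n over K_c. Then |R(w_opt) − R_n(ŵ_opt)| ≤ 3 a_n c². -/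
open Matrix Finset

/-- Theorem 1, third inequality: with a_n = ‖Σ̂ − Σ‖_max and gross-exposure
constraint set K_c = {w : 1ᵀw = 1, ‖w‖₁ ≤ c}, the oracle risk and the empirical
risk of the empirically optimal portfolio differ by at most 3 a_n c². -/
theorem oracle_risk_minus_empirical_risk_le
    (p : ℕ) (S Shat : Matrix (Fin p) (Fin p) ℝ) (c : ℝ) (hc : 1 ≤ c)
    (wopt what : Fin p → ℝ)
    (hwopt_sum : ∑ i, wopt i = 1) (hwopt_l1 : ∑ i, |wopt i| ≤ c)
    (hwopt_min : ∀ w : Fin p → ℝ, ∑ i, w i = 1 → ∑ i, |w i| ≤ c →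
      wopt ⬝ᵥ S.mulVec wopt ≤ w ⬝ᵥ S.mulVec w)
    (hwhat_sum : ∑ i, what i = 1) (hwhat_l1 : ∑ i, |what i| ≤ c)
    (hwhat_min : ∀ w : Fin p → ℝ, ∑ i, w i = 1 → ∑ i, |w i| ≤ c →
      what ⬝ᵥ Shat.mulVec what ≤ w ⬝ᵥ Shat.mulVec w) :
    |wopt ⬝ᵥ S.mulVec wopt - what ⬝ᵥ Shat.mulVec what| ≤
      3 * (⨆ i, ⨆ j, |Shat i j - S i j|) * c ^ 2 := by
  set a := ⨆ i, ⨆ j, |Shat i j - S i j| with ha_def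
  have hp : 0 < p := by
    rcases Nat.eq_zero_or_pos p with h | h
    · subst h; simp at hwopt_sum
    · exact h
  haveI : Nonempty (Fin p) := Fin.pos_iff_nonempty.mp hp
  have hbdd : ∀ i j, |Shat i j - S i j| ≤ a := by
    intro i j
    have h1 : |Shat i j - S i j| ≤ ⨆ j, |Shat i j - S i j| :=
      le_ciSup (f := fun j => |Shat i j - S i j|)
        (Set.Finite.bddAbove (Set.finite_range _)) j
    exact h1.trans (le_ciSup (f := fun i => ⨆ j, |Shat i j - S i j|)
        (Set.Finite.bddAbove (Set.finite_range _)) i)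
  have ha0 : 0 ≤ a := le_trans (abs_nonneg _) (hbdd ⟨0, hp⟩ ⟨0, hp⟩)
  have key : ∀ w : Fin p → ℝ, ∑ i, |w i| ≤ c →
      |w ⬝ᵥ Shat.mulVec w - w ⬝ᵥ S.mulVec w| ≤ a * c ^ 2 := by
    intro w hw
    have hw0 : 0 ≤ ∑ i, |w i| := Finset.sum_nonneg fun i _ => abs_nonneg _
    have hrw : w ⬝ᵥ Shat.mulVec w - w ⬝ᵥ S.mulVec w
        = ∑ i, ∑ j, w i * (Shat i j - S i j) * w j := by
      simp only [dotProduct, mulVec, Finset.mul_sum, ← Finset.sum_sub_distrib]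
      congr 1; ext i; congr 1; ext j; ring
    rw [hrw]
    calc |∑ i, ∑ j, w i * (Shat i j - S i j) * w j|
        ≤ ∑ i, |∑ j, w i * (Shat i j - S i j) * w j| :=
          Finset.abs_sum_le_sum_abs _ _
      _ ≤ ∑ i, ∑ j, |w i * (Shat i j - S i j) * w j| :=
          Finset.sum_le_sum fun i _ => Finset.abs_sum_le_sum_abs _ _
      _ ≤ ∑ i, ∑ j, a * (|w i| * |w j|) := by
          refine Finset.sum_le_sum fun i _ => Finset.sum_le_sum fun j _ => ?_
          rw [abs_mul, abs_mul,
            show |w i| * |Shat i j - S i j| * |w j|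
              = |Shat i j - S i j| * (|w i| * |w j|) from by ring]
          exact mul_le_mul_of_nonneg_right (hbdd i j)
            (mul_nonneg (abs_nonneg _) (abs_nonneg _))
      _ = a * ((∑ i, |w i|) * (∑ j, |w j|)) := by
          rw [Finset.sum_mul_sum, Finset.mul_sum]
          congr 1; ext i; rw [Finset.mul_sum]
      _ ≤ a * (c * c) := by
          have : (∑ i, |w i|) * (∑ j, |w j|) ≤ c * c := by
            exact mul_le_mul hw hw hw0 (le_trans hw0 hw)
          exact mul_le_mul_of_nonneg_left this ha0
      _ = a * c ^ 2 := by ring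
  have h1 := hwopt_min what hwhat_sum hwhat_l1
  have h2 := hwhat_min wopt hwopt_sum hwopt_l1
  have k1 := key what hwhat_l1
  have k2 := key wopt hwopt_l1
  rw [abs_le] at k1 k2 ⊢
  have hc2 : 0 ≤ a * c ^ 2 := mul_nonneg ha0 (by positivity)
  constructor <;> nlinarith
end

section
/- There exists a universal constant C > 0 such that for every r ∈ [2, ∞), every p ≥ 1, and all x, y ∈ ℝ^p, V(x + y) ≤ V(x) + yᵀV′(x) + C r V(y), where V(x) = ‖x‖_r² and V′(x) is the gradient of V at x, whose j-th component equals 2 ‖x‖_r^{2−r} |x_j|^{r−1} sign(x_j) for x ≠ 0 and 0 for x = 0. -/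
/-!
Minkowski gives `‖x + y‖ ≤ ‖x‖ + ‖y‖` and Hölder bounds the gradient term by `2‖x‖‖y‖`, which
settles the case `‖x‖ ≤ r‖y‖`. Otherwise sum over the coordinates the one-dimensional bound
`|a + b|^r ≤ |a|^r + r|a|^(r-1) sign(a) b + r(r-1)(|a| + |b|)^(r-2) b²`, a mean value argument
resting on `t ↦ |t|^(r-1) sign t` being `(r-1)M^(r-2)`-Lipschitz on `[-M, M]`. Hölder with the
exponents `r/(r-2)` and `r/2` bounds the remainder by `(‖x‖ + ‖y‖)^(r-2)‖y‖² ≤ e‖x‖^(r-2)‖y‖²`,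
since `(1 + 1/r)^(r-2) ≤ e`, and the tangent line of the concave map `s ↦ s^(2/r)` carries the
estimate from `‖·‖^r` to `‖·‖²`. This gives `C = 6`.
-/

open Finset Real Set

noncomputable def oddRpow (q t : ℝ) : ℝ := |t| ^ q * Real.sign t

lemma oddRpow_of_nonneg {q t : ℝ} (hq : q ≠ 0) (ht : 0 ≤ t) : oddRpow q t = t ^ q := by
  rcases ht.eq_or_lt with rfl | ht
  · simp [oddRpow, zero_rpow hq]
  · rw [oddRpow, abs_of_pos ht, sign_of_pos ht, mul_one]

lemma oddRpow_neg (q t : ℝ) : oddRpow q (-t) = -oddRpow q t := by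
  rw [oddRpow, oddRpow, abs_neg, Real.sign_neg, mul_neg]

lemma oddRpow_eq_abs_rpow_sub_one_mul (q t : ℝ) : oddRpow q t = |t| ^ (q - 1) * t := by
  rcases lt_trichotomy t 0 with ht | rfl | ht
  · rw [oddRpow, sign_of_neg ht, rpow_sub_one (abs_pos.2 ht.ne).ne', abs_of_neg ht]
    field_simp
    rw [mul_div_cancel_left₀ _ ht.ne]
  · simp [oddRpow]
  · rw [oddRpow, sign_of_pos ht, rpow_sub_one (abs_pos.2 ht.ne').ne', abs_of_pos ht]
    field_simp

lemma abs_oddRpow {q : ℝ} (hq : q ≠ 0) (t : ℝ) : |oddRpow q t| = |t| ^ q := by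
  rcases eq_or_ne t 0 with rfl | ht
  · simp [oddRpow, zero_rpow hq]
  · rcases sign_apply_eq_of_ne_zero t ht with h | h <;>
      simp [oddRpow, h, abs_of_nonneg (rpow_nonneg (abs_nonneg t) q)]

lemma hasDerivAt_abs_rpow_oddRpow {p : ℝ} (hp : 1 < p) (t : ℝ) :
    HasDerivAt (fun s : ℝ => |s| ^ p) (p * oddRpow (p - 1) t) t := by
  convert hasDerivAt_abs_rpow t hp using 1
  rw [oddRpow_eq_abs_rpow_sub_one_mul, sub_sub, one_add_one_eq_two, mul_assoc]

lemma rpow_sub_rpow_le_mul_sub {q M u v : ℝ} (hq : 1 ≤ q) (hv : 0 ≤ v) (hvu : v ≤ u)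
    (hu : u ≤ M) : u ^ q - v ^ q ≤ q * M ^ (q - 1) * (u - v) := by
  refine (convex_Icc 0 M).image_sub_le_mul_sub_of_deriv_le (f := fun t => t ^ q)
    (continuousOn_id.rpow_const fun _ _ => Or.inr (by linarith))
    (differentiable_rpow_const hq).differentiableOn (fun t ht => ?_)
    v ⟨hv, hvu.trans hu⟩ u ⟨hv.trans hvu, hu⟩ hvu
  rw [interior_Icc] at ht
  rw [Real.deriv_rpow_const]
  gcongr <;> linarith [ht.1, ht.2]

lemma oddRpow_sub_oddRpow_mem_Icc {q M u v : ℝ} (hq : 1 ≤ q) (hvu : v ≤ u) (hu : |u| ≤ M)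
    (hv : |v| ≤ M) : oddRpow q u - oddRpow q v ∈ Icc 0 (q * M ^ (q - 1) * (u - v)) := by
  have hq0 : q ≠ 0 := by positivity
  have of_nonneg : ∀ {a b}, 0 ≤ b → b ≤ a → a ≤ M →
      oddRpow q a - oddRpow q b ∈ Icc 0 (q * M ^ (q - 1) * (a - b)) := fun hb hba ha => by
    rw [oddRpow_of_nonneg hq0 (hb.trans hba), oddRpow_of_nonneg hq0 hb]
    exact ⟨sub_nonneg.2 (rpow_le_rpow hb hba (by linarith)), rpow_sub_rpow_le_mul_sub hq hb hba ha⟩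
  have of_nonpos : ∀ {a b}, b ≤ a → a ≤ 0 → -b ≤ M →
      oddRpow q a - oddRpow q b ∈ Icc 0 (q * M ^ (q - 1) * (a - b)) := fun hba ha hb => by
    have := of_nonneg (neg_nonneg.2 ha) (neg_le_neg hba) hb
    rwa [oddRpow_neg, oddRpow_neg, neg_sub_neg, neg_sub_neg] at this
  rcases le_total 0 v with hv0 | hv0
  · exact of_nonneg hv0 hvu (le_of_abs_le hu)
  rcases le_total u 0 with hu0 | hu0
  · exact of_nonpos hvu hu0 ((neg_le_abs v).trans hv)
  -- across the origin, chain the two one-signed estimates through `oddRpow q 0`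
  have h₁ := of_nonneg le_rfl hu0 (le_of_abs_le hu)
  have h₂ := of_nonpos hv0 le_rfl ((neg_le_abs v).trans hv)
  constructor <;> linarith [h₁.1, h₁.2, h₂.1, h₂.2]

lemma abs_oddRpow_sub_oddRpow_le {q M u v : ℝ} (hq : 1 ≤ q) (hu : |u| ≤ M) (hv : |v| ≤ M) :
    |oddRpow q u - oddRpow q v| ≤ q * M ^ (q - 1) * |u - v| := by
  rcases le_total v u with h | h
  · obtain ⟨h₀, h₁⟩ := oddRpow_sub_oddRpow_mem_Icc hq h hu hv
    rwa [abs_of_nonneg h₀, abs_of_nonneg (sub_nonneg.2 h)]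
  · obtain ⟨h₀, h₁⟩ := oddRpow_sub_oddRpow_mem_Icc hq h hv hu
    rwa [abs_sub_comm, abs_of_nonneg h₀, abs_sub_comm, abs_of_nonneg (sub_nonneg.2 h)]

lemma abs_add_rpow_le {p : ℝ} (hp : 2 ≤ p) (a b : ℝ) :
    |a + b| ^ p ≤ |a| ^ p + p * oddRpow (p - 1) a * b +
      p * (p - 1) * (|a| + |b|) ^ (p - 2) * b ^ 2 := by
  set L := p * (p - 1) * (|a| + |b|) ^ (p - 2)
  have hL : 0 ≤ L := mul_nonneg (mul_nonneg (by linarith) (by linarith)) (by positivity)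
  set g : ℝ → ℝ := fun s => |a + s| ^ p - p * oddRpow (p - 1) a * s
  have hg : ∀ s, HasDerivAt g (p * oddRpow (p - 1) (a + s) - p * oddRpow (p - 1) a) s := by
    intro s
    have h := (hasDerivAt_abs_rpow_oddRpow (p := p) (by linarith) (a + s)).comp s
      ((hasDerivAt_id s).const_add a)
    exact (h.sub ((hasDerivAt_id s).const_mul (p * oddRpow (p - 1) a))).congr_deriv (by ring)
  have hg_le : ∀ s ∈ uIcc 0 b,
      ‖p * oddRpow (p - 1) (a + s) - p * oddRpow (p - 1) a‖ ≤ L * |b| := by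
    intro s hs
    have hsb : |s| ≤ |b| := by simpa using abs_sub_left_of_mem_uIcc hs
    have hψ := abs_oddRpow_sub_oddRpow_le (q := p - 1) (M := |a| + |b|) (u := a + s) (v := a)
      (by linarith) ((abs_add_le a s).trans (by linarith)) (by linarith [abs_nonneg b])
    rw [add_sub_cancel_left, sub_sub, one_add_one_eq_two] at hψ
    rw [Real.norm_eq_abs, ← mul_sub, abs_mul, abs_of_nonneg (by linarith : 0 ≤ p)]
    calc p * |oddRpow (p - 1) (a + s) - oddRpow (p - 1) a|
        ≤ p * ((p - 1) * (|a| + |b|) ^ (p - 2) * |s|) := by gcongr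
      _ ≤ L * |b| := by
        rw [← mul_assoc, ← mul_assoc]
        exact mul_le_mul_of_nonneg_left hsb hL
  have h := (convex_uIcc 0 b).norm_image_sub_le_of_norm_hasDerivWithin_le
    (fun s _ => (hg s).hasDerivWithinAt) hg_le left_mem_uIcc right_mem_uIcc
  simp only [g, Real.norm_eq_abs, sub_zero, add_zero, mul_zero] at h
  have hb : |b| * |b| = b ^ 2 := by rw [← sq, sq_abs]
  linarith [le_abs_self (|a + b| ^ p - p * oddRpow (p - 1) a * b - |a| ^ p),
    show L * |b| * |b| = L * b ^ 2 by rw [mul_assoc, hb]]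

lemma rpow_le_rpow_add_mul_rpow_sub_one_mul_sub {s A B : ℝ} (hs₀ : 0 ≤ s) (hs₁ : s ≤ 1)
    (hA : 0 ≤ A) (hB : 0 < B) : A ^ s ≤ B ^ s + s * B ^ (s - 1) * (A - B) := by
  have h := rpow_one_add_le_one_add_mul_self (s := A / B - 1) (by linarith [div_nonneg hA hB.le])
    hs₀ hs₁
  rw [add_sub_cancel, div_rpow hA hB.le, div_le_iff₀ (rpow_pos_of_pos hB s)] at h
  rw [rpow_sub_one hB.ne']
  refine h.trans_eq ?_
  field_simp

lemma sq_le_sq_add_of_rpow {r u v : ℝ} (hr : 2 ≤ r) (hu : 0 ≤ u) (hv : 0 < v) :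
    u ^ 2 ≤ v ^ 2 + 2 / r * v ^ (2 - r) * (u ^ r - v ^ r) := by
  have h := rpow_le_rpow_add_mul_rpow_sub_one_mul_sub (s := 2 / r) (by positivity)
    ((div_le_one (by positivity)).2 hr) (rpow_nonneg hu r) (rpow_pos_of_pos hv r)
  have hr₀ : r ≠ 0 := by positivity
  have he : r * (2 / r - 1) = 2 - r := by field_simp
  rwa [← rpow_mul hu, ← rpow_mul hv.le, ← rpow_mul hv.le, mul_div_cancel₀ _ hr₀, he,
    rpow_two, rpow_two] at h

lemma one_add_inv_rpow_le_exp_one {r : ℝ} (hr : 0 < r) : (1 + r⁻¹) ^ r ≤ exp 1 := by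
  calc (1 + r⁻¹) ^ r ≤ exp r⁻¹ ^ r := by
        gcongr
        linarith [add_one_le_exp r⁻¹]
    _ = exp 1 := by rw [← exp_mul, inv_mul_cancel₀ hr.ne']

lemma add_rpow_le_exp_one_mul_rpow {r s N M : ℝ} (hr : 0 < r) (hs : 0 ≤ s) (hsr : s ≤ r)
    (hM : 0 ≤ M) (h : r * M ≤ N) : (N + M) ^ s ≤ exp 1 * N ^ s := by
  have hN : 0 ≤ N := by nlinarith
  have hNM : N + M ≤ N * (1 + r⁻¹) := by
    have : M ≤ N * r⁻¹ := by rw [← div_eq_mul_inv, le_div_iff₀ hr]; linarith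
    linarith
  calc (N + M) ^ s ≤ (N * (1 + r⁻¹)) ^ s := rpow_le_rpow (by positivity) hNM hs
    _ = N ^ s * (1 + r⁻¹) ^ s := mul_rpow hN (by positivity)
    _ ≤ N ^ s * (1 + r⁻¹) ^ r := by
        gcongr
        exact le_add_of_nonneg_right (by positivity)
    _ ≤ N ^ s * exp 1 := by gcongr; exact one_add_inv_rpow_le_exp_one hr
    _ = exp 1 * N ^ s := mul_comm _ _

section LrNorm

variable {ι : Type*} [Fintype ι] {r : ℝ}

noncomputable def lrNorm (r : ℝ) (z : ι → ℝ) : ℝ := (∑ i, |z i| ^ r) ^ (1 / r)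

noncomputable def gradSqLrNorm (r : ℝ) (x : ι → ℝ) (j : ι) : ℝ :=
  if x = 0 then 0 else 2 * lrNorm r x ^ (2 - r) * |x j| ^ (r - 1) * Real.sign (x j)

lemma lrNorm_nonneg (r : ℝ) (z : ι → ℝ) : 0 ≤ lrNorm r z :=
  rpow_nonneg (sum_nonneg fun _ _ => rpow_nonneg (abs_nonneg _) r) _

lemma lrNorm_rpow_eq (t : ℝ) (z : ι → ℝ) :
    lrNorm r z ^ t = (∑ i, |z i| ^ r) ^ (t / r) := by
  rw [lrNorm, ← rpow_mul (sum_nonneg fun _ _ => rpow_nonneg (abs_nonneg _) r), one_div_mul_eq_div]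

lemma lrNorm_rpow (hr : r ≠ 0) (z : ι → ℝ) : lrNorm r z ^ r = ∑ i, |z i| ^ r := by
  rw [lrNorm_rpow_eq, div_self hr, rpow_one]

lemma lrNorm_abs (r : ℝ) (z : ι → ℝ) : lrNorm r (fun i => |z i|) = lrNorm r z := by
  simp only [lrNorm, abs_abs]

lemma lrNorm_add_le (hr : 1 ≤ r) (x y : ι → ℝ) : lrNorm r (x + y) ≤ lrNorm r x + lrNorm r y :=
  Real.Lp_add_le univ x y hr

lemma abs_sum_mul_oddRpow_le (hr : 1 < r) (x y : ι → ℝ) :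
    |∑ i, y i * oddRpow (r - 1) (x i)| ≤ lrNorm r y * lrNorm r x ^ (r - 1) := by
  have hpq := Real.HolderConjugate.conjExponent hr
  calc |∑ i, y i * oddRpow (r - 1) (x i)| ≤ ∑ i, |y i| * |x i| ^ (r - 1) := by
        simpa only [abs_mul, abs_oddRpow (sub_ne_zero.2 hr.ne')] using
          abs_sum_le_sum_abs (fun i => y i * oddRpow (r - 1) (x i)) univ
    _ ≤ lrNorm r y * (∑ i, (|x i| ^ (r - 1)) ^ conjExponent r) ^ (1 / conjExponent r) :=
        inner_le_Lp_mul_Lq_of_nonneg univ hpq (fun _ _ => abs_nonneg _)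
          (fun _ _ => rpow_nonneg (abs_nonneg _) _)
    _ = lrNorm r y * lrNorm r x ^ (r - 1) := by
        have hr₁ : r - 1 ≠ 0 := sub_ne_zero.2 hr.ne'
        simp_rw [← rpow_mul (abs_nonneg _), conjExponent, mul_div_cancel₀ _ hr₁, one_div_div,
          lrNorm_rpow_eq]

lemma sum_rpow_sub_two_mul_sq_le (hr : 2 ≤ r) {a : ι → ℝ} (ha : 0 ≤ a) (b : ι → ℝ) :
    ∑ i, a i ^ (r - 2) * b i ^ 2 ≤ lrNorm r a ^ (r - 2) * lrNorm r b ^ 2 := by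
  rcases hr.eq_or_lt with rfl | hr
  · rw [sub_self, ← rpow_two (lrNorm 2 b), lrNorm_rpow two_ne_zero]
    simp only [rpow_zero, one_mul, rpow_two, sq_abs, le_refl]
  have hpq : (r / (r - 2)).HolderConjugate (r / 2) := by
    rw [Real.holderConjugate_iff]
    constructor
    · rw [lt_div_iff₀ (by linarith)]
      linarith
    · field_simp
      ring
  calc ∑ i, a i ^ (r - 2) * b i ^ 2
      ≤ (∑ i, (a i ^ (r - 2)) ^ (r / (r - 2))) ^ (1 / (r / (r - 2))) *
          (∑ i, (b i ^ 2) ^ (r / 2)) ^ (1 / (r / 2)) :=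
        inner_le_Lp_mul_Lq_of_nonneg univ hpq (fun i _ => rpow_nonneg (ha i) _)
          (fun _ _ => sq_nonneg _)
    _ = lrNorm r a ^ (r - 2) * lrNorm r b ^ 2 := by
        have hr₂ : r - 2 ≠ 0 := by linarith
        have ha' : ∑ i, (a i ^ (r - 2)) ^ (r / (r - 2)) = ∑ i, |a i| ^ r :=
          sum_congr rfl fun i _ => by
            rw [← rpow_mul (ha i), mul_div_cancel₀ _ hr₂, abs_of_nonneg (ha i)]
        have hb' : ∑ i, (b i ^ 2) ^ (r / 2) = ∑ i, |b i| ^ r :=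
          sum_congr rfl fun i _ => by
            rw [← sq_abs, ← rpow_two, ← rpow_mul (abs_nonneg _), mul_div_cancel₀ _ two_ne_zero]
        rw [ha', hb', one_div_div, one_div_div, ← lrNorm_rpow_eq, ← lrNorm_rpow_eq, rpow_two]

lemma lrNorm_add_rpow_le (hr : 2 ≤ r) (x y : ι → ℝ) :
    lrNorm r (x + y) ^ r ≤ lrNorm r x ^ r + r * ∑ i, y i * oddRpow (r - 1) (x i) +
      r * (r - 1) * ∑ i, (|x i| + |y i|) ^ (r - 2) * y i ^ 2 := by
  have hr₀ : r ≠ 0 := by positivity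
  rw [lrNorm_rpow hr₀, lrNorm_rpow hr₀, mul_sum, mul_sum, ← sum_add_distrib, ← sum_add_distrib]
  refine sum_le_sum fun i _ => (abs_add_rpow_le hr (x i) (y i)).trans_eq ?_
  ring

lemma sum_abs_add_abs_rpow_mul_sq_le (hr : 2 ≤ r) {x y : ι → ℝ}
    (h : r * lrNorm r y ≤ lrNorm r x) :
    ∑ i, (|x i| + |y i|) ^ (r - 2) * y i ^ 2 ≤ exp 1 * lrNorm r x ^ (r - 2) * lrNorm r y ^ 2 := by
  have hM := lrNorm_nonneg r y
  have hz : lrNorm r (fun i => |x i| + |y i|) ≤ lrNorm r x + lrNorm r y :=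
    calc lrNorm r (fun i => |x i| + |y i|)
        ≤ lrNorm r (fun i => |x i|) + lrNorm r (fun i => |y i|) :=
          lrNorm_add_le (by linarith) _ _
      _ = lrNorm r x + lrNorm r y := by rw [lrNorm_abs, lrNorm_abs]
  calc ∑ i, (|x i| + |y i|) ^ (r - 2) * y i ^ 2
      ≤ lrNorm r (fun i => |x i| + |y i|) ^ (r - 2) * lrNorm r y ^ 2 :=
        sum_rpow_sub_two_mul_sq_le hr (fun i => by positivity) y
    _ ≤ (lrNorm r x + lrNorm r y) ^ (r - 2) * lrNorm r y ^ 2 := by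
        gcongr
        exact lrNorm_nonneg r _
    _ ≤ exp 1 * lrNorm r x ^ (r - 2) * lrNorm r y ^ 2 := by
        gcongr
        exact add_rpow_le_exp_one_mul_rpow (by linarith) (by linarith) (by linarith) hM h

lemma sum_mul_gradSqLrNorm (r : ℝ) (x y : ι → ℝ) :
    ∑ j, y j * gradSqLrNorm r x j =
      2 * lrNorm r x ^ (2 - r) * ∑ j, y j * oddRpow (r - 1) (x j) := by
  by_cases hx : x = 0
  · simp [gradSqLrNorm, hx, oddRpow]
  · simp only [gradSqLrNorm, if_neg hx, oddRpow, mul_sum]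
    exact sum_congr rfl fun j _ => by ring

lemma abs_sum_mul_gradSqLrNorm_le (hr : 1 < r) (x y : ι → ℝ) :
    |∑ j, y j * gradSqLrNorm r x j| ≤ 2 * lrNorm r x * lrNorm r y := by
  have hN := lrNorm_nonneg r x
  rw [sum_mul_gradSqLrNorm, abs_mul, abs_of_nonneg (by positivity)]
  calc 2 * lrNorm r x ^ (2 - r) * |∑ j, y j * oddRpow (r - 1) (x j)|
      ≤ 2 * lrNorm r x ^ (2 - r) * (lrNorm r y * lrNorm r x ^ (r - 1)) := by
        gcongr
        exact abs_sum_mul_oddRpow_le hr x y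
    _ = 2 * lrNorm r x * lrNorm r y := by
        have hpow : lrNorm r x ^ (2 - r) * lrNorm r x ^ (r - 1) = lrNorm r x := by
          rw [← rpow_add' hN (by norm_num)]
          norm_num
        linear_combination (2 * lrNorm r y) * hpow

lemma sq_lrNorm_add_le_of_le_mul (hr : 1 < r) {x y : ι → ℝ}
    (h : lrNorm r x ≤ r * lrNorm r y) :
    lrNorm r (x + y) ^ 2 ≤
      lrNorm r x ^ 2 + ∑ j, y j * gradSqLrNorm r x j + 6 * r * lrNorm r y ^ 2 := by
  have hM := lrNorm_nonneg r y
  have hgrad_ge := neg_abs_le (∑ j, y j * gradSqLrNorm r x j)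
  have hsq : lrNorm r (x + y) ^ 2 ≤ (lrNorm r x + lrNorm r y) ^ 2 :=
    pow_le_pow_left₀ (lrNorm_nonneg r _) (lrNorm_add_le hr.le x y) 2
  nlinarith [abs_sum_mul_gradSqLrNorm_le hr x y]

lemma sq_lrNorm_add_le_of_mul_lt (hr : 2 ≤ r) {x y : ι → ℝ}
    (h : r * lrNorm r y < lrNorm r x) :
    lrNorm r (x + y) ^ 2 ≤
      lrNorm r x ^ 2 + ∑ j, y j * gradSqLrNorm r x j + 6 * r * lrNorm r y ^ 2 := by
  set N := lrNorm r x
  set M := lrNorm r y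
  set G := ∑ i, y i * oddRpow (r - 1) (x i)
  set T := ∑ i, (|x i| + |y i|) ^ (r - 2) * y i ^ 2
  have hM : 0 ≤ M := lrNorm_nonneg r y
  have hN : 0 < N := lt_of_le_of_lt (by positivity) h
  have hT : T ≤ exp 1 * N ^ (r - 2) * M ^ 2 := sum_abs_add_abs_rpow_mul_sq_le hr h.le
  have hNT : N ^ (2 - r) * T ≤ exp 1 * M ^ 2 := by
    have hNN : N ^ (2 - r) * N ^ (r - 2) = 1 := by
      rw [← rpow_add hN]
      norm_num
    calc N ^ (2 - r) * T ≤ N ^ (2 - r) * (exp 1 * N ^ (r - 2) * M ^ 2) := by gcongr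
      _ = exp 1 * M ^ 2 := by linear_combination (exp 1 * M ^ 2) * hNN
  have hgrad : ∑ j, y j * gradSqLrNorm r x j = 2 * N ^ (2 - r) * G :=
    sum_mul_gradSqLrNorm r x y
  have hexp : 2 * (r - 1) * exp 1 ≤ 6 * r := by nlinarith [exp_one_lt_d9]
  calc lrNorm r (x + y) ^ 2
      ≤ N ^ 2 + 2 / r * N ^ (2 - r) * (lrNorm r (x + y) ^ r - N ^ r) :=
        sq_le_sq_add_of_rpow hr (lrNorm_nonneg r _) hN
    _ ≤ N ^ 2 + 2 / r * N ^ (2 - r) * (r * G + r * (r - 1) * T) := by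
        gcongr
        linarith [lrNorm_add_rpow_le hr x y]
    _ = N ^ 2 + 2 * N ^ (2 - r) * G + 2 * (r - 1) * (N ^ (2 - r) * T) := by
        field_simp
        ring
    _ ≤ N ^ 2 + ∑ j, y j * gradSqLrNorm r x j + 6 * r * M ^ 2 := by
        rw [hgrad]
        nlinarith [mul_le_mul_of_nonneg_left hNT (by linarith : 0 ≤ 2 * (r - 1)),
          mul_le_mul_of_nonneg_right hexp (sq_nonneg M)]

lemma sq_lrNorm_add_le (hr : 2 ≤ r) (x y : ι → ℝ) :
    lrNorm r (x + y) ^ 2 ≤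
      lrNorm r x ^ 2 + ∑ j, y j * gradSqLrNorm r x j + 6 * r * lrNorm r y ^ 2 := by
  rcases le_or_gt (lrNorm r x) (r * lrNorm r y) with h | h
  · exact sq_lrNorm_add_le_of_le_mul (by linarith) h
  · exact sq_lrNorm_add_le_of_mul_lt hr h

end LrNorm

/-- Nemirovski-type second-order smoothness of the squared ℓ^r-norm: there is a
universal constant C > 0 such that for every r ∈ [2, ∞), p ≥ 1 and x, y ∈ ℝ^p,
V(x + y) ≤ V(x) + yᵀV′(x) + C r V(y), where V(x) = ‖x‖_r² and V′ is the gradient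
of V, with j-th component 2‖x‖_r^{2−r}|x_j|^{r−1} sign(x_j) (and V′(0) = 0). -/
theorem squared_lr_norm_smoothness :
    ∃ C : ℝ, 0 < C ∧
      ∀ (r : ℝ), 2 ≤ r → ∀ (p : ℕ), 1 ≤ p → ∀ x y : Fin p → ℝ,
        (fun z : Fin p → ℝ => ((∑ i, |z i| ^ r) ^ (1 / r)) ^ 2) (x + y) ≤
          (fun z : Fin p → ℝ => ((∑ i, |z i| ^ r) ^ (1 / r)) ^ 2) x +
            (∑ j, y j *
              (if x = 0 then 0 else
                2 * ((∑ i, |x i| ^ r) ^ (1 / r)) ^ (2 - r) * |x j| ^ (r - 1) * Real.sign (x j))) +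
            C * r * (fun z : Fin p → ℝ => ((∑ i, |z i| ^ r) ^ (1 / r)) ^ 2) y :=
  ⟨6, by norm_num, fun _ hr _ _ x y => sq_lrNorm_add_le hr x y⟩
end

section
/- Let a > 0 and C > 0, let (p_n) be a sequence of positive integers with p_n → ∞, and for each n let Σ^{(n)} and Σ̂^{(n)} be p_n×p_n matrices (Σ̂^{(n)} random) with entries σ_{ij}^{(n)} and σ̂_{ij}^{(n)}. Suppose there exists x₀ > 0 such that for all n, all x ≥ x₀, and all pairs (i,j), P(√n |σ_{ij}^{(n)} − σ̂_{ij}^{(n)}| > x) < exp(−C x^{1/a}). Then ‖Σ^{(n)} − Σ̂^{(n)}‖_max = O_P((log p_n)^a / √n); that is, for every ε > 0 there exist D > 0 and N such that for all n ≥ N, P(‖Σ^{(n)} − Σ̂^{(n)}‖_max > D (log p_n)^a / √n) < ε. -/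
open MeasureTheory Finset ENNReal

/-- Theorem 3, first conclusion in asymptotic O_P form: if every entry of the
covariance estimator has exponential-type tails,
P(√n |σ_{ij} − σ̂_{ij}| > x) < exp(−C x^{1/a}) for all x ≥ x₀, then
‖Σ − Σ̂‖_max = O_P((log p_n)^a / √n) as p_n → ∞. -/
theorem covariance_sup_norm_O_P
    (a C : ℝ) (ha : 0 < a) (hC : 0 < C)
    (p : ℕ → ℕ) (hp : Filter.Tendsto p Filter.atTop Filter.atTop)
    (Ω : ℕ → Type*) [∀ n, MeasurableSpace (Ω n)]
    (μ : ∀ n, Measure (Ω n)) [∀ n, IsProbabilityMeasure (μ n)]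
    (S : ∀ n, Matrix (Fin (p n)) (Fin (p n)) ℝ)
    (Shat : ∀ n, Ω n → Matrix (Fin (p n)) (Fin (p n)) ℝ)
    (x₀ : ℝ) (hx₀ : 0 < x₀)
    (h : ∀ n, ∀ x : ℝ, x₀ ≤ x → ∀ i j,
      μ n {ω | Real.sqrt n * |S n i j - Shat n ω i j| > x} <
        ENNReal.ofReal (Real.exp (-C * x ^ (1 / a)))) :
    ∀ ε : ℝ, 0 < ε → ∃ D : ℝ, 0 < D ∧ ∃ N : ℕ, ∀ n, N ≤ n →
      μ n {ω | (⨆ i, ⨆ j, |S n i j - Shat n ω i j|) >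
          D * Real.log (p n) ^ a / Real.sqrt n} < ENNReal.ofReal ε := by
  intro ε hε
  have ha' : a ≠ 0 := ha.ne'
  set D : ℝ := (3 / C) ^ a with hDdef
  have hD0 : 0 < D := Real.rpow_pos_of_pos (by positivity) a
  refine ⟨D, hD0, ?_⟩
  set M : ℕ := max 3 (max (⌈1/ε⌉₊ + 1) (⌈Real.exp ((x₀/D) ^ (1/a))⌉₊ + 1)) with hMdef
  obtain ⟨N, hN⟩ := Filter.eventually_atTop.mp (hp.eventually_ge_atTop M)
  refine ⟨max N 1, ?_⟩
  intro n hn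
  have hnN : N ≤ n := le_trans (le_max_left _ _) hn
  have hn1 : 1 ≤ n := le_trans (le_max_right _ _) hn
  have hM : M ≤ p n := hN n hnN
  have hq3 : 3 ≤ p n := le_trans (le_max_left _ _) hM
  have hq0 : (0:ℝ) < (p n : ℝ) := by positivity
  set q : ℝ := (p n : ℝ) with hq
  set L : ℝ := Real.log q with hLdef
  have hL1 : 1 ≤ L := by
    rw [hLdef, Real.le_log_iff_exp_le hq0]
    calc Real.exp 1 ≤ 2.7182818286 := Real.exp_one_lt_d9.le
    _ ≤ 3 := by norm_num
    _ ≤ q := by rw [hq]; exact_mod_cast hq3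
  have hL0 : 0 ≤ L := le_trans zero_le_one hL1
  have hsn : (0:ℝ) < Real.sqrt n := Real.sqrt_pos.2 (by exact_mod_cast hn1)
  -- lower bound: log q ≥ (x₀/D)^(1/a)
  have hLx : (x₀/D) ^ (1/a) ≤ L := by
    rw [hLdef, Real.le_log_iff_exp_le hq0]
    have h1 : (⌈Real.exp ((x₀/D) ^ (1/a))⌉₊ : ℝ) + 1 ≤ q := by
      have := le_trans (le_trans (le_max_right _ _) (le_max_right _ _)) hM
      rw [hq]; exact_mod_cast this
    linarith [Nat.le_ceil (Real.exp ((x₀/D) ^ (1/a)))]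
  set x : ℝ := D * L ^ a with hxdef
  have hxx₀ : x₀ ≤ x := by
    have hbase : (0:ℝ) ≤ (x₀/D) ^ (1/a) := Real.rpow_nonneg (by positivity) _
    have : (x₀/D) ≤ L ^ a := by
      calc x₀/D = ((x₀/D) ^ (1/a)) ^ a := by
            rw [← Real.rpow_mul (by positivity), one_div, inv_mul_cancel₀ ha', Real.rpow_one]
      _ ≤ L ^ a := Real.rpow_le_rpow hbase hLx ha.le
    calc x₀ = D * (x₀/D) := by field_simp
    _ ≤ D * L ^ a := by nlinarith
  -- exponent computation
  have hxpow : C * x ^ (1/a) = 3 * L := by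
    have h1 : x ^ (1/a) = D ^ (1/a) * L := by
      rw [hxdef, Real.mul_rpow hD0.le (Real.rpow_nonneg hL0 a),
        ← Real.rpow_mul hL0, mul_one_div_cancel ha', Real.rpow_one]
    have h2 : D ^ (1/a) = 3 / C := by
      rw [hDdef, ← Real.rpow_mul (by positivity), mul_one_div_cancel ha', Real.rpow_one]
    rw [h1, h2]; field_simp
  -- the union bound
  set A : Fin (p n) → Fin (p n) → Set (Ω n) :=
    fun i j => {ω | Real.sqrt n * |S n i j - Shat n ω i j| > x} with hA
  have hsub : {ω | (⨆ i, ⨆ j, |S n i j - Shat n ω i j|) >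
      D * Real.log (p n) ^ a / Real.sqrt n} ⊆ ⋃ i, ⋃ j, A i j := by
    intro ω hω
    have hω' : x / Real.sqrt n < ⨆ i, ⨆ j, |S n i j - Shat n ω i j| := hω
    have : Nonempty (Fin (p n)) := ⟨⟨0, by omega⟩⟩
    obtain ⟨i, hi⟩ := exists_lt_of_lt_ciSup hω'
    obtain ⟨j, hj⟩ := exists_lt_of_lt_ciSup hi
    have : x < Real.sqrt n * |S n i j - Shat n ω i j| := by
      rw [mul_comm]
      exact (div_lt_iff₀ hsn).mp hj
    exact Set.mem_iUnion.2 ⟨i, Set.mem_iUnion.2 ⟨j, this⟩⟩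
  set e : ℝ≥0∞ := ENNReal.ofReal (Real.exp (-C * x ^ (1/a))) with he
  have hbound : μ n {ω | (⨆ i, ⨆ j, |S n i j - Shat n ω i j|) >
      D * Real.log (p n) ^ a / Real.sqrt n} ≤ (p n : ℝ≥0∞) * ((p n : ℝ≥0∞) * e) := by
    calc μ n _ ≤ μ n (⋃ i, ⋃ j, A i j) := measure_mono hsub
    _ ≤ ∑' i : Fin (p n), μ n (⋃ j, A i j) := measure_iUnion_le _
    _ = ∑ i : Fin (p n), μ n (⋃ j, A i j) := tsum_fintype _
    _ ≤ ∑ i : Fin (p n), ∑' j : Fin (p n), μ n (A i j) :=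
        Finset.sum_le_sum (fun i _ => measure_iUnion_le _)
    _ = ∑ i : Fin (p n), ∑ j : Fin (p n), μ n (A i j) := by
        simp [tsum_fintype]
    _ ≤ ∑ i : Fin (p n), ∑ j : Fin (p n), e :=
        Finset.sum_le_sum (fun i _ => Finset.sum_le_sum (fun j _ => (h n x hxx₀ i j).le))
    _ = (p n : ℝ≥0∞) * ((p n : ℝ≥0∞) * e) := by
        simp [Finset.sum_const, mul_assoc]
  refine lt_of_le_of_lt hbound ?_
  -- real-number final estimate
  have hreal : q * (q * Real.exp (-C * x ^ (1/a))) < ε := by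
    have hexp : Real.exp (-C * x ^ (1/a)) = q ^ (-3 : ℝ) := by
      have h3 : -C * x ^ (1/a) = Real.log q * (-3) := by rw [← hLdef]; linarith [hxpow]
      rw [h3, ← Real.rpow_def_of_pos hq0]
    rw [hexp]
    have hq2 : q * (q * q ^ (-3:ℝ)) = q⁻¹ := by
      rw [show q * (q * q ^ (-3:ℝ)) = q ^ (2:ℝ) * q ^ (-3:ℝ) by
            rw [show (2:ℝ) = ((2:ℕ):ℝ) by norm_num, Real.rpow_natCast]; ring,
          ← Real.rpow_add hq0]
      norm_num [Real.rpow_neg_one]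
    rw [hq2]
    have hqε : 1/ε < q := by
      have h1 : (⌈1/ε⌉₊ : ℝ) + 1 ≤ q := by
        have := le_trans (le_trans (le_max_left _ _) (le_max_right _ _)) hM
        rw [hq]; exact_mod_cast this
      linarith [Nat.le_ceil (1/ε)]
    rw [inv_lt_iff_one_lt_mul₀ hq0]
    have h1 : (1:ℝ) = ε * (1/ε) := by field_simp
    nlinarith
  calc (p n : ℝ≥0∞) * ((p n : ℝ≥0∞) * e)
      = ENNReal.ofReal (q * (q * Real.exp (-C * x ^ (1/a)))) := by
        rw [he, ENNReal.ofReal_mul hq0.le, ENNReal.ofReal_mul hq0.le,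
          ENNReal.ofReal_natCast]
  _ < ENNReal.ofReal ε := (ENNReal.ofReal_lt_ofReal_iff hε).2 hreal
end
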